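/- For any u ∈ (0,1), ∫₀¹ Φ^{-1}(v)(min(u,v) − uv)/φ(Φ^{-1}(v)) dv = (Φ^{-1}(u)/2) ∫₀¹ (min(u,v) − uv)/φ(Φ^{-1}(v)) dv. -/

import Mathlib

open MeasureTheory ProbabilityTheory Real Set Filter Topology

noncomputable def stdphi (x : ℝ) : ℝ := gaussianPDFReal 0 1 x
noncomputable def stdPhi (x : ℝ) : ℝ := ∫ t in Set.Iic x, gaussianPDFReal 0 1 t
noncomputable def stdPhiInv (u : ℝ) : ℝ := sInf {x : ℝ | u ≤ stdPhi x}

lemma stdphi_eq (x : ℝ) : stdphi x = (Real.sqrt (2 * Real.pi))⁻¹ * Real.exp (-x ^ 2 / 2) := by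
  simp [stdphi, gaussianPDFReal]

lemma stdphi_pos (x : ℝ) : 0 < stdphi x := gaussianPDFReal_pos 0 1 x (by norm_num)

lemma stdphi_neg (x : ℝ) : stdphi (-x) = stdphi x := by
  simp [stdphi_eq]

lemma continuous_stdphi : Continuous stdphi := by
  rw [funext stdphi_eq]
  continuity

lemma integrable_stdphi : Integrable stdphi := integrable_gaussianPDFReal 0 1

lemma integral_stdphi : ∫ x, stdphi x = 1 := integral_gaussianPDFReal_eq_one 0 (by norm_num)

lemma hasDerivAt_stdphi (x : ℝ) : HasDerivAt stdphi (-x * stdphi x) x := by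
  have h : HasDerivAt (fun y : ℝ => -y ^ 2 / 2) (-x) x := by
    have := ((hasDerivAt_pow 2 x).neg).div_const 2
    simpa using this.congr_deriv (by ring)
  have h2 := (h.exp).const_mul (Real.sqrt (2 * Real.pi))⁻¹
  have hh : stdphi = fun y => (Real.sqrt (2 * Real.pi))⁻¹ * Real.exp (-y ^ 2 / 2) :=
    funext stdphi_eq
  rw [hh]
  refine h2.congr_deriv ?_
  beta_reduce
  ring

lemma integrable_mul_stdphi : Integrable (fun x => x * stdphi x) := by
  have h := (integrable_mul_exp_neg_mul_sq (by norm_num : (0:ℝ) < 1/2)).const_mul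
    (Real.sqrt (2 * Real.pi))⁻¹
  have hh : (fun x => x * stdphi x)
      = fun x => (Real.sqrt (2 * Real.pi))⁻¹ * (x * Real.exp (-(1/2) * x ^ 2)) := by
    funext x
    rw [stdphi_eq]
    ring_nf
  rw [hh]
  exact h

lemma stdPhi_def (x : ℝ) : stdPhi x = ∫ t in Set.Iic x, stdphi t := rfl

lemma stdPhi_sub (x y : ℝ) : stdPhi y - stdPhi x = ∫ t in x..y, stdphi t :=
  intervalIntegral.integral_Iic_sub_Iic integrable_stdphi.integrableOn
    integrable_stdphi.integrableOn

lemma hasDerivAt_stdPhi (x : ℝ) : HasDerivAt stdPhi (stdphi x) x := by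
  have hh : stdPhi = fun y => stdPhi 0 + ∫ t in (0:ℝ)..y, stdphi t := by
    funext y
    rw [← stdPhi_sub 0 y]; ring
  rw [hh]
  exact ((intervalIntegral.integral_hasDerivAt_right
    integrable_stdphi.intervalIntegrable
    (continuous_stdphi.stronglyMeasurableAtFilter volume (nhds x))
    continuous_stdphi.continuousAt)).const_add _

lemma continuous_stdPhi : Continuous stdPhi :=
  continuous_iff_continuousAt.2 fun x => (hasDerivAt_stdPhi x).continuousAt

lemma strictMono_stdPhi : StrictMono stdPhi := by
  intro x y hxy
  have h := stdPhi_sub x y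
  have hpos : 0 < ∫ t in x..y, stdphi t :=
    intervalIntegral.intervalIntegral_pos_of_pos
      integrable_stdphi.intervalIntegrable stdphi_pos hxy
  linarith

lemma stdPhi_nonneg (x : ℝ) : 0 ≤ stdPhi x := by
  rw [stdPhi_def]
  exact setIntegral_nonneg measurableSet_Iic fun t _ => (stdphi_pos t).le

lemma stdPhi_pos (x : ℝ) : 0 < stdPhi x :=
  lt_of_le_of_lt (stdPhi_nonneg (x - 1)) (strictMono_stdPhi (by linarith))

lemma stdPhi_add_neg (x : ℝ) : stdPhi x + stdPhi (-x) = 1 := by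
  have h1 : ∫ t in Set.Ioi x, stdphi t = stdPhi (-x) := by
    have := integral_comp_neg_Ioi x stdphi
    simp only [stdphi_neg] at this
    rw [stdPhi_def, ← this]
  rw [← h1, stdPhi_def]
  rw [intervalIntegral.integral_Iic_add_Ioi integrable_stdphi.integrableOn integrable_stdphi.integrableOn]
  exact integral_stdphi

lemma stdPhi_lt_one (x : ℝ) : stdPhi x < 1 := by
  have := stdPhi_add_neg x
  have := stdPhi_pos (-x)
  linarith

lemma tendsto_exp_bound : Tendsto (fun x : ℝ => (Real.sqrt (2 * Real.pi))⁻¹ * Real.exp x)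
    atBot (𝓝 0) := by
  have := Real.tendsto_exp_atBot.const_mul ((Real.sqrt (2 * Real.pi))⁻¹)
  simpa using this

lemma tendsto_stdphi_atBot : Tendsto stdphi atBot (𝓝 0) := by
  apply tendsto_of_tendsto_of_tendsto_of_le_of_le' tendsto_const_nhds tendsto_exp_bound
  · exact Eventually.of_forall fun x => (stdphi_pos x).le
  · filter_upwards [eventually_le_atBot (-2 : ℝ)] with x hx
    rw [stdphi_eq]
    have h : -x ^ 2 / 2 ≤ x := by nlinarith
    exact mul_le_mul_of_nonneg_left (Real.exp_le_exp.2 h) (by positivity)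

lemma tendsto_neg_mul_stdphi_atBot : Tendsto (fun x => -x * stdphi x) atBot (𝓝 0) := by
  apply tendsto_of_tendsto_of_tendsto_of_le_of_le' tendsto_const_nhds tendsto_exp_bound
  · filter_upwards [eventually_le_atBot (0 : ℝ)] with x hx
    exact mul_nonneg (by linarith) (stdphi_pos x).le
  · filter_upwards [eventually_le_atBot (-4 : ℝ)] with x hx
    rw [stdphi_eq]
    have h1 : -x ≤ Real.exp (-x) := by linarith [Real.add_one_le_exp (-x)]
    calc -x * ((Real.sqrt (2 * Real.pi))⁻¹ * Real.exp (-x ^ 2 / 2))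
        = (Real.sqrt (2 * Real.pi))⁻¹ * (-x * Real.exp (-x ^ 2 / 2)) := by ring
      _ ≤ (Real.sqrt (2 * Real.pi))⁻¹ * (Real.exp (-x) * Real.exp (-x ^ 2 / 2)) := by
          exact mul_le_mul_of_nonneg_left
            (mul_le_mul_of_nonneg_right h1 (Real.exp_pos _).le) (by positivity)
      _ = (Real.sqrt (2 * Real.pi))⁻¹ * Real.exp (-x + -x ^ 2 / 2) := by rw [← Real.exp_add]
      _ ≤ (Real.sqrt (2 * Real.pi))⁻¹ * Real.exp x := by
          exact mul_le_mul_of_nonneg_left (Real.exp_le_exp.2 (by nlinarith)) (by positivity)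

lemma tendsto_mul_stdphi_atBot : Tendsto (fun x => x * stdphi x) atBot (𝓝 0) := by
  have := tendsto_neg_mul_stdphi_atBot.neg
  simp only [neg_mul, neg_neg, neg_zero] at this
  exact this

lemma integral_Iic_mul_stdphi (x : ℝ) : ∫ t in Set.Iic x, t * stdphi t = -stdphi x := by
  have h := integral_Iic_of_hasDerivAt_of_tendsto' (a := x) (m := 0) (f := fun t => -stdphi t)
    (f' := fun t => t * stdphi t)
    (fun t _ => by exact ((hasDerivAt_stdphi t).neg).congr_deriv (by ring))
    integrable_mul_stdphi.integrableOn
    (by simpa using tendsto_stdphi_atBot.neg)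
  simpa using h

lemma mills {x : ℝ} (hx : x < 0) : -x * stdPhi x ≤ stdphi x := by
  have hh : (fun t => t * x⁻¹ * stdphi t) = fun t => x⁻¹ * (t * stdphi t) := by
    funext t; ring
  have hint : Integrable (fun t => t * x⁻¹ * stdphi t) := by
    rw [hh]; exact integrable_mul_stdphi.const_mul x⁻¹
  have hmono : stdPhi x ≤ ∫ t in Set.Iic x, t * x⁻¹ * stdphi t := by
    rw [stdPhi_def]
    apply setIntegral_mono_on integrable_stdphi.integrableOn hint.integrableOn measurableSet_Iic
    intro t ht
    have h1 : 1 ≤ t * x⁻¹ := by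
      rw [← div_eq_mul_inv, le_div_iff_of_neg hx, one_mul]
      exact ht
    nlinarith [stdphi_pos t]
  have hval : ∫ t in Set.Iic x, t * x⁻¹ * stdphi t = x⁻¹ * -stdphi x := by
    rw [hh, MeasureTheory.integral_const_mul, integral_Iic_mul_stdphi]
  rw [hval] at hmono
  have hx' : x ≠ 0 := ne_of_lt hx
  calc -x * stdPhi x ≤ -x * (x⁻¹ * -stdphi x) :=
        mul_le_mul_of_nonneg_left hmono (by linarith)
    _ = stdphi x := by field_simp

lemma stdPhi_le_stdphi {x : ℝ} (hx : x ≤ -1) : stdPhi x ≤ stdphi x := by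
  have hm := mills (show x < 0 by linarith)
  nlinarith [stdPhi_nonneg x]

lemma tendsto_stdPhi_atBot : Tendsto stdPhi atBot (𝓝 0) := by
  apply tendsto_of_tendsto_of_tendsto_of_le_of_le' tendsto_const_nhds tendsto_stdphi_atBot
  · exact Eventually.of_forall stdPhi_nonneg
  · filter_upwards [eventually_le_atBot (-1 : ℝ)] with x hx
    exact stdPhi_le_stdphi hx

lemma tendsto_neg_mul_stdPhi_atBot : Tendsto (fun x => -x * stdPhi x) atBot (𝓝 0) := by
  apply tendsto_of_tendsto_of_tendsto_of_le_of_le' tendsto_const_nhds tendsto_stdphi_atBot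
  · filter_upwards [eventually_le_atBot (0 : ℝ)] with x hx
    exact mul_nonneg (by linarith) (stdPhi_nonneg x)
  · filter_upwards [eventually_le_atBot (-1 : ℝ)] with x hx
    exact mills (by linarith)

lemma tendsto_mul_stdPhi_atBot : Tendsto (fun x => x * stdPhi x) atBot (𝓝 0) := by
  have := tendsto_neg_mul_stdPhi_atBot.neg
  simp only [neg_mul, neg_neg, neg_zero] at this
  exact this

lemma tendsto_sq_mul_stdPhi_atBot : Tendsto (fun x => x ^ 2 * stdPhi x) atBot (𝓝 0) := by
  apply tendsto_of_tendsto_of_tendsto_of_le_of_le' tendsto_const_nhds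
    tendsto_neg_mul_stdphi_atBot
  · exact Eventually.of_forall fun x => mul_nonneg (sq_nonneg x) (stdPhi_nonneg x)
  · filter_upwards [eventually_le_atBot (-1 : ℝ)] with x hx
    have hm := mills (show x < 0 by linarith)
    nlinarith [stdPhi_nonneg x]

lemma integrableOn_stdPhi_Iic (b : ℝ) : IntegrableOn stdPhi (Set.Iic b) := by
  have h1 : IntegrableOn stdPhi (Set.Iic (-1)) := by
    apply Integrable.mono' integrable_stdphi.integrableOn
      continuous_stdPhi.aestronglyMeasurable.restrict
    filter_upwards [ae_restrict_mem measurableSet_Iic] with x hx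
    rw [Real.norm_eq_abs, abs_of_nonneg (stdPhi_nonneg x)]
    exact stdPhi_le_stdphi hx
  have h2 : IntegrableOn stdPhi (Set.Icc (-1) b) := continuous_stdPhi.integrableOn_Icc
  refine (h1.union h2).mono_set fun x hx => ?_
  rcases le_or_gt x (-1) with h | h
  · exact Or.inl h
  · exact Or.inr ⟨h.le, hx⟩

lemma integrableOn_mul_stdPhi_Iic (b : ℝ) :
    IntegrableOn (fun t => t * stdPhi t) (Set.Iic b) := by
  have h1 : IntegrableOn (fun t => t * stdPhi t) (Set.Iic (-1)) := by
    apply Integrable.mono' integrable_stdphi.integrableOn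
      (continuous_id.mul continuous_stdPhi).aestronglyMeasurable.restrict
    filter_upwards [ae_restrict_mem measurableSet_Iic] with x hx
    have hx0 : x < 0 := by linarith [hx.out]
    simp only [Pi.mul_apply, id_eq]
    rw [Real.norm_eq_abs, abs_of_nonpos (mul_nonpos_of_nonpos_of_nonneg hx0.le
      (stdPhi_nonneg x))]
    have := mills hx0
    linarith
  have h2 : IntegrableOn (fun t => t * stdPhi t) (Set.Icc (-1) b) :=
    (continuous_id.mul continuous_stdPhi).integrableOn_Icc
  refine (h1.union h2).mono_set fun x hx => ?_
  rcases le_or_gt x (-1) with h | h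
  · exact Or.inl h
  · exact Or.inr ⟨h.le, hx⟩

lemma integral_Iic_stdPhi (b : ℝ) :
    ∫ t in Set.Iic b, stdPhi t = b * stdPhi b + stdphi b := by
  have h := integral_Iic_of_hasDerivAt_of_tendsto' (a := b) (m := 0)
    (f := fun t => t * stdPhi t + stdphi t) (f' := stdPhi)
    (fun t _ => (((hasDerivAt_id t).mul (hasDerivAt_stdPhi t)).add
      (hasDerivAt_stdphi t)).congr_deriv (by simp only [id_eq]; ring))
    (integrableOn_stdPhi_Iic b)
    (by simpa using tendsto_mul_stdPhi_atBot.add tendsto_stdphi_atBot)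
  simpa using h

lemma integral_Iic_mul_stdPhi (b : ℝ) :
    ∫ t in Set.Iic b, t * stdPhi t
      = (b ^ 2 - 1) / 2 * stdPhi b + b * stdphi b / 2 := by
  have htend : Tendsto (fun t => (t ^ 2 - 1) / 2 * stdPhi t + t * stdphi t / 2)
      atBot (𝓝 0) := by
    have h := ((tendsto_sq_mul_stdPhi_atBot.sub tendsto_stdPhi_atBot).div_const 2).add
      (tendsto_mul_stdphi_atBot.div_const 2)
    have h2 := h.congr (fun t => by ring :
      ∀ t : ℝ, (t ^ 2 * stdPhi t - stdPhi t) / 2 + t * stdphi t / 2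
        = (t ^ 2 - 1) / 2 * stdPhi t + t * stdphi t / 2)
    simpa using h2
  have h := integral_Iic_of_hasDerivAt_of_tendsto' (a := b) (m := 0)
    (f := fun t => (t ^ 2 - 1) / 2 * stdPhi t + t * stdphi t / 2)
    (f' := fun t => t * stdPhi t)
    (fun t _ => (((((hasDerivAt_pow 2 t).sub_const 1).div_const 2).mul
      (hasDerivAt_stdPhi t)).add
      (((hasDerivAt_id t).mul (hasDerivAt_stdphi t)).div_const 2)).congr_deriv
      (by simp only [id_eq]; ring))
    (integrableOn_mul_stdPhi_Iic b) htend
  simpa using h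

lemma integrableOn_comp_neg {g : ℝ → ℝ} {c : ℝ} (h : IntegrableOn g (Set.Iic (-c))) :
    IntegrableOn (fun x => g (-x)) (Set.Ioi c) := by
  have h2 := ((Measure.measurePreserving_neg (volume : Measure ℝ)).integrableOn_comp_preimage
    (Homeomorph.neg ℝ).measurableEmbedding).2 h
  have h3 : ((fun x : ℝ => -x) ⁻¹' Set.Iic (-c)) = Set.Ici c := by
    ext y; simp
  rw [h3] at h2
  exact h2.mono_set Set.Ioi_subset_Ici_self

lemma tendsto_stdPhi_atTop : Tendsto stdPhi atTop (𝓝 1) := by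
  have h : ∀ x, stdPhi x = 1 - stdPhi (-x) := fun x => by linarith [stdPhi_add_neg x]
  rw [funext h]
  have := (tendsto_stdPhi_atBot.comp tendsto_neg_atTop_atBot).const_sub 1
  simpa using this

lemma stdPhi_surj {u : ℝ} (hu : u ∈ Set.Ioo (0:ℝ) 1) : ∃ x, stdPhi x = u := by
  obtain ⟨x₀, hx₀⟩ := (tendsto_stdPhi_atBot.eventually_lt_const hu.1).exists
  obtain ⟨x₁, hx₁⟩ := (tendsto_stdPhi_atTop.eventually_const_lt hu.2).exists
  obtain ⟨x, hx⟩ := intermediate_value_univ x₀ x₁ continuous_stdPhi ⟨hx₀.le, hx₁.le⟩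
  exact ⟨x, hx⟩

lemma stdPhiInv_stdPhi (x : ℝ) : stdPhiInv (stdPhi x) = x := by
  have h : {y : ℝ | stdPhi x ≤ stdPhi y} = Set.Ici x := by
    ext y
    simpa using strictMono_stdPhi.le_iff_le
  rw [stdPhiInv, h, csInf_Ici]

lemma stdPhi_stdPhiInv {u : ℝ} (hu : u ∈ Set.Ioo (0:ℝ) 1) : stdPhi (stdPhiInv u) = u := by
  obtain ⟨x, hx⟩ := stdPhi_surj hu
  rw [← hx, stdPhiInv_stdPhi]

lemma image_stdPhi_univ : stdPhi '' Set.univ = Set.Ioo (0:ℝ) 1 := by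
  rw [Set.image_univ]
  ext y
  constructor
  · rintro ⟨x, rfl⟩
    exact ⟨stdPhi_pos x, stdPhi_lt_one x⟩
  · intro hy
    exact stdPhi_surj hy

lemma integral_Ioo_eq (g : ℝ → ℝ) :
    ∫ v in Set.Ioo (0:ℝ) 1, g v = ∫ x, stdphi x * g (stdPhi x) := by
  rw [← image_stdPhi_univ,
    integral_image_eq_integral_abs_deriv_smul MeasurableSet.univ
      (fun x _ => (hasDerivAt_stdPhi x).hasDerivWithinAt) (strictMono_stdPhi.injective.injOn) g]
  rw [Measure.restrict_univ]
  congr 1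
  funext x
  rw [abs_of_pos (stdphi_pos x), smul_eq_mul]

/-- For any `u ∈ (0,1)`:
`∫₀¹ Φ⁻¹(v)(min(u,v) − uv)/φ(Φ⁻¹(v)) dv
  = (Φ⁻¹(u)/2)·∫₀¹ (min(u,v) − uv)/φ(Φ⁻¹(v)) dv`. -/
theorem stmt5 (u : ℝ) (hu : u ∈ Set.Ioo (0:ℝ) 1) :
    ∫ v in Set.Ioo (0:ℝ) 1, stdPhiInv v * (min u v - u * v) / stdphi (stdPhiInv v)
      = (stdPhiInv u / 2) * ∫ v in Set.Ioo (0:ℝ) 1, (min u v - u * v) / stdphi (stdPhiInv v) := by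
  set a := stdPhiInv u with ha_def
  have ha : stdPhi a = u := stdPhi_stdPhiInv hu
  have hna : stdPhi (-a) = 1 - u := by linarith [stdPhi_add_neg a]
  have hL : ∫ v in Set.Ioo (0:ℝ) 1, stdPhiInv v * (min u v - u * v) / stdphi (stdPhiInv v)
      = ∫ x, x * (min u (stdPhi x) - u * stdPhi x) := by
    rw [integral_Ioo_eq]
    congr 1
    funext x
    rw [stdPhiInv_stdPhi]
    rw [mul_comm]
    exact div_mul_cancel₀ _ (ne_of_gt (stdphi_pos x))
  have hR : ∫ v in Set.Ioo (0:ℝ) 1, (min u v - u * v) / stdphi (stdPhiInv v)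
      = ∫ x, (min u (stdPhi x) - u * stdPhi x) := by
    rw [integral_Ioo_eq]
    congr 1
    funext x
    rw [stdPhiInv_stdPhi]
    rw [mul_comm]
    exact div_mul_cancel₀ _ (ne_of_gt (stdphi_pos x))
  have hmono : ∀ x ∈ Set.Iic a, stdPhi x ≤ u := fun x hx => ha ▸ strictMono_stdPhi.monotone hx
  have hge : ∀ x ∈ Set.Ioi a, u ≤ stdPhi x :=
    fun x hx => ha ▸ strictMono_stdPhi.monotone (le_of_lt hx)
  have eq1 : Set.EqOn (fun x => min u (stdPhi x) - u * stdPhi x)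
      (fun x => (1 - u) * stdPhi x) (Set.Iic a) := fun x hx => by
    simp only []
    rw [min_eq_right (hmono x hx)]
    ring
  have eq2 : Set.EqOn (fun x => x * (min u (stdPhi x) - u * stdPhi x))
      (fun x => (1 - u) * (x * stdPhi x)) (Set.Iic a) := fun x hx => by
    simp only []
    rw [min_eq_right (hmono x hx)]
    ring
  have hPhiNeg : ∀ x : ℝ, stdPhi (-x) = 1 - stdPhi x := fun x => by
    linarith [stdPhi_add_neg x]
  have eq3 : Set.EqOn (fun x => min u (stdPhi x) - u * stdPhi x)
      (fun x => u * stdPhi (-x)) (Set.Ioi a) := fun x hx => by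
    simp only []
    rw [min_eq_left (hge x hx), hPhiNeg x]
    ring
  have eq4 : Set.EqOn (fun x => x * (min u (stdPhi x) - u * stdPhi x))
      (fun x => u * (x * stdPhi (-x))) (Set.Ioi a) := fun x hx => by
    simp only []
    rw [min_eq_left (hge x hx), hPhiNeg x]
    ring
  -- integrability
  have int1 : IntegrableOn (fun x => min u (stdPhi x) - u * stdPhi x) (Set.Iic a) :=
    (MeasureTheory.IntegrableOn.congr_fun ((integrableOn_stdPhi_Iic a).const_mul (1 - u)) eq1.symm measurableSet_Iic)
  have int2 : IntegrableOn (fun x => x * (min u (stdPhi x) - u * stdPhi x)) (Set.Iic a) :=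
    (MeasureTheory.IntegrableOn.congr_fun ((integrableOn_mul_stdPhi_Iic a).const_mul (1 - u)) eq2.symm measurableSet_Iic)
  have intR1 : IntegrableOn (fun x => stdPhi (-x)) (Set.Ioi a) :=
    integrableOn_comp_neg (integrableOn_stdPhi_Iic (-a))
  have intR2 : IntegrableOn (fun x => x * stdPhi (-x)) (Set.Ioi a) := by
    have h := (integrableOn_comp_neg (c := a)
      (g := fun t => t * stdPhi t) (integrableOn_mul_stdPhi_Iic (-a))).neg
    have hh : (fun x => -(-x * stdPhi (-x))) = fun x => x * stdPhi (-x) := by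
      funext x; ring
    rw [← hh]
    exact h
  have int3 : IntegrableOn (fun x => min u (stdPhi x) - u * stdPhi x) (Set.Ioi a) :=
    (MeasureTheory.IntegrableOn.congr_fun (intR1.const_mul u) eq3.symm measurableSet_Ioi)
  have int4 : IntegrableOn (fun x => x * (min u (stdPhi x) - u * stdPhi x)) (Set.Ioi a) :=
    (MeasureTheory.IntegrableOn.congr_fun (intR2.const_mul u) eq4.symm measurableSet_Ioi)
  -- values
  have vIic1 : ∫ x in Set.Iic a, (min u (stdPhi x) - u * stdPhi x)
      = (1 - u) * (a * u + stdphi a) := by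
    rw [setIntegral_congr_fun measurableSet_Iic eq1, integral_const_mul,
      integral_Iic_stdPhi, ha]
  have vIic2 : ∫ x in Set.Iic a, x * (min u (stdPhi x) - u * stdPhi x)
      = (1 - u) * ((a ^ 2 - 1) / 2 * u + a * stdphi a / 2) := by
    rw [setIntegral_congr_fun measurableSet_Iic eq2, integral_const_mul,
      integral_Iic_mul_stdPhi, ha]
  have refl1 : ∫ x in Set.Ioi a, stdPhi (-x) = -a * (1 - u) + stdphi a := by
    rw [integral_comp_neg_Ioi, integral_Iic_stdPhi, hna, stdphi_neg]
  have refl2 : ∫ x in Set.Ioi a, x * stdPhi (-x)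
      = -(((-a) ^ 2 - 1) / 2 * (1 - u) + -a * stdphi a / 2) := by
    have h1 : ∫ x in Set.Ioi a, x * stdPhi (-x)
        = -∫ x in Set.Ioi a, -x * stdPhi (-x) := by
      rw [← integral_neg]
      congr 1
      funext x
      ring
    rw [h1, integral_comp_neg_Ioi (f := fun t => t * stdPhi t),
      integral_Iic_mul_stdPhi, hna, stdphi_neg]
  have vIoi1 : ∫ x in Set.Ioi a, (min u (stdPhi x) - u * stdPhi x)
      = u * (-a * (1 - u) + stdphi a) := by
    rw [setIntegral_congr_fun measurableSet_Ioi eq3, integral_const_mul, refl1]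
  have vIoi2 : ∫ x in Set.Ioi a, x * (min u (stdPhi x) - u * stdPhi x)
      = u * -(((-a) ^ 2 - 1) / 2 * (1 - u) + -a * stdphi a / 2) := by
    rw [setIntegral_congr_fun measurableSet_Ioi eq4, integral_const_mul, refl2]
  rw [hL, hR, ← intervalIntegral.integral_Iic_add_Ioi int2 int4,
    ← intervalIntegral.integral_Iic_add_Ioi int1 int3,
    vIic1, vIic2, vIoi1, vIoi2]
  ring
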